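/- arXiv:1711.07214 — 8 statements merged into one kernel-verified Lean document; each statement's English description precedes it below -/
import Mathlib

section
/- Let f : 2^V → ℝ be monotone (X ⊆ Y implies f(X) ≤ f(Y)) and ε-approximately submodular, meaning for all X ⊆ Y ⊆ V and v ∉ Y, f(X ∪ {v}) − f(X) ≥ f(Y ∪ {v}) − f(Y) − ε. Let x* ⊆ V with |x*| ≤ k and f(x*) = OPT. Then for any X ⊆ V with x* \ X nonempty, there exists v ∉ X such that f(X ∪ {v}) − f(X) ≥ (OPT − f(X))/k − ε. -/
lemma telescope_bound {V : Type*} [DecidableEq V] (f : Finset V → ℝ) (ε : ℝ)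
    (happrox : ∀ X Y : Finset V, X ⊆ Y → ∀ v ∉ Y,
      f (insert v X) - f X ≥ f (insert v Y) - f Y - ε) :
    ∀ S X : Finset V, Disjoint S X →
      f (X ∪ S) - f X ≤ ∑ v ∈ S, (f (insert v X) - f X + ε) := by
  intro S
  induction S using Finset.cons_induction with
  | empty => intro X _; simp
  | cons a S' ha ih =>
    intro X hdisj
    have hdisj' : Disjoint S' X := by
      exact (Finset.disjoint_insert_left.mp (by simpa using hdisj)).2
    have haX : a ∉ X := by
      have := Finset.disjoint_insert_left.mp (by simpa using hdisj)
      exact this.1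
    have haXS' : a ∉ X ∪ S' := by simp [haX, ha]
    have h1 : f (insert a (X ∪ S')) - f (X ∪ S') ≤ f (insert a X) - f X + ε := by
      have := happrox X (X ∪ S') (Finset.subset_union_left) a haXS'
      linarith
    have h2 := ih X hdisj'
    have heq : X ∪ Finset.cons a S' ha = insert a (X ∪ S') := by
      ext x; simp [Finset.mem_union, or_comm, or_left_comm]
    rw [heq, Finset.sum_cons]
    linarith

/-- Greedy-improvement lemma for ε-approximately submodular functions
(Krause et al. notion). -/
theorem greedy_improvement_eps_approx {V : Type*} [DecidableEq V] (f : Finset V → ℝ)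
    (ε : ℝ) (hε : 0 ≤ ε) (k : ℕ) (hk : 1 ≤ k)
    (hmono : ∀ X Y : Finset V, X ⊆ Y → f X ≤ f Y)
    (happrox : ∀ X Y : Finset V, X ⊆ Y → ∀ v ∉ Y,
      f (insert v X) - f X ≥ f (insert v Y) - f Y - ε)
    (xstar : Finset V) (hxcard : xstar.card ≤ k)
    (OPT : ℝ) (hOPT : f xstar = OPT) :
    ∀ X : Finset V, (xstar \ X).Nonempty →
      ∃ v ∉ X, f (insert v X) - f X ≥ (OPT - f X) / k - ε := by
  intro X hne
  set S := xstar \ X with hS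
  have hdisj : Disjoint S X := Finset.sdiff_disjoint
  by_cases hpos : OPT - f X ≤ 0
  · obtain ⟨v, hv⟩ := hne
    have hvX : v ∉ X := (Finset.mem_sdiff.mp hv).2
    refine ⟨v, hvX, ?_⟩
    have hgain : 0 ≤ f (insert v X) - f X := by
      have := hmono X (insert v X) (Finset.subset_insert _ _)
      linarith
    have hk0 : (0:ℝ) < k := by exact_mod_cast hk
    have : (OPT - f X) / k ≤ 0 := div_nonpos_of_nonpos_of_nonneg hpos hk0.le
    linarith
  · push_neg at hpos
    have hle := telescope_bound f ε happrox S X hdisj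
    have hXS : X ∪ S = X ∪ xstar := by
      ext x; simp [hS, Finset.mem_sdiff]
    have hOPTle : OPT ≤ f (X ∪ S) := by
      rw [hXS, ← hOPT]
      exact hmono xstar (X ∪ xstar) Finset.subset_union_right
    -- pick maximizer
    obtain ⟨v, hvS, hvmax⟩ := Finset.exists_max_image S (fun v => f (insert v X) - f X) hne
    have hvX : v ∉ X := (Finset.mem_sdiff.mp hvS).2
    refine ⟨v, hvX, ?_⟩
    have hsum_le : ∑ w ∈ S, (f (insert w X) - f X + ε)
        ≤ S.card * (f (insert v X) - f X + ε) := by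
      rw [Finset.card_eq_sum_ones S]
      push_cast
      rw [Finset.sum_mul]
      apply Finset.sum_le_sum
      intro w hw
      have := hvmax w hw
      linarith
    have hcard_pos : 0 < S.card := Finset.card_pos.mpr hne
    have hcardk : S.card ≤ k := le_trans (Finset.card_le_card (Finset.sdiff_subset)) hxcard
    have hSR : (0:ℝ) < S.card := by exact_mod_cast hcard_pos
    have hkR : (0:ℝ) < k := by exact_mod_cast hk
    have hcardkR : (S.card : ℝ) ≤ k := by exact_mod_cast hcardk
    have h1 : OPT - f X ≤ S.card * (f (insert v X) - f X + ε) := by linarith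
    have h2 : (OPT - f X) / S.card ≤ f (insert v X) - f X + ε := by
      rw [div_le_iff₀ hSR]; linarith [h1]
    have h3 : (OPT - f X) / k ≤ (OPT - f X) / S.card :=
      div_le_div_of_nonneg_left hpos.le hSR hcardkR
    linarith
end

section
/- Let f be monotone and ε-approximately submodular (f(X ∪ {v}) − f(X) ≥ f(Y ∪ {v}) − f(Y) − ε for X ⊆ Y, v ∉ Y), with optimum OPT over sets of size at most k. Define a sequence of sets X_0 = ∅ and X_{i+1} = X_i ∪ {v_i} where v_i is chosen so that f(X_{i+1}) − f(X_i) ≥ (OPT − f(X_i))/k − ε. Then f(X_k) ≥ (1 − (1 − 1/k)^k)(OPT − kε) ≥ (1 − 1/e)(OPT − kε). -/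
/-! Writing `q = 1 - 1/k`, the step condition says exactly that the shifted gap
`OPT - k ε - f(Xᵢ)` shrinks by the factor `q` at each step (`k ε` is the fixed point of
`g ↦ q g + ε`), so after `k` steps it is at most `qᵏ (OPT - k ε)`. The second bound follows
from `qᵏ ≤ e⁻¹` when `OPT ≥ k ε`, and from `f(Xₖ) ≥ f(∅) = 0` otherwise. -/

open Real

lemma one_sub_pow_mul_le_of_marginal_gain_ge {a : ℕ → ℝ} {M ε k : ℝ} (hk : 1 ≤ k) (n : ℕ)
    (h0 : a 0 = 0) (hgain : ∀ i < n, a (i + 1) - a i ≥ (M - a i) / k - ε) :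
    (1 - (1 - 1 / k) ^ n) * (M - k * ε) ≤ a n := by
  have hq : 0 ≤ 1 - 1 / k := sub_nonneg.2 <| (div_le_one₀ (by linarith)).2 hk
  have hgap := le_geom (u := fun i ↦ M - k * ε - a i) hq n fun i hi ↦ by
    have hcontract : (1 - 1 / k) * (M - k * ε - a i) = M - k * ε - a i - ((M - a i) / k - ε) := by
      field_simp
      ring
    linarith [hgain i hi]
  simp only [h0, sub_zero] at hgap
  linarith

lemma one_sub_inv_exp_le_one_sub_one_sub_inv_pow {k : ℕ} (hk : 1 ≤ k) :
    1 - 1 / exp 1 ≤ 1 - (1 - 1 / (k : ℝ)) ^ k := by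
  have := one_sub_div_pow_le_exp_neg (n := k) (t := 1) (by exact_mod_cast hk)
  rw [exp_neg, ← one_div] at this
  linarith

theorem greedy_sequence_eps_approx_bound_general {V : Type*} [DecidableEq V]
    (f : Finset V → ℝ) (ε : ℝ) (k : ℕ) (hk : 1 ≤ k)
    (hmono : ∀ X Y : Finset V, X ⊆ Y → f X ≤ f Y) (hempty : f ∅ = 0)
    (OPT : ℝ)
    (X : ℕ → Finset V) (hX0 : X 0 = ∅)
    (hstep : ∀ i < k, ∃ v ∉ X i, X (i + 1) = insert v (X i) ∧
      f (X (i + 1)) - f (X i) ≥ (OPT - f (X i)) / k - ε) :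
    f (X k) ≥ (1 - (1 - 1 / (k : ℝ)) ^ k) * (OPT - k * ε) ∧
      f (X k) ≥ (1 - 1 / Real.exp 1) * (OPT - k * ε) := by
  have hratio : (1 - (1 - 1 / (k : ℝ)) ^ k) * (OPT - k * ε) ≤ f (X k) :=
    one_sub_pow_mul_le_of_marginal_gain_ge (a := f ∘ X) (by exact_mod_cast hk) k
      (by simp [hX0, hempty]) fun i hi ↦ (hstep i hi).choose_spec.2.2
  refine ⟨hratio, ?_⟩
  have hnonneg : 0 ≤ f (X k) := hempty ▸ hmono ∅ (X k) (Finset.empty_subset _)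
  have hexp := one_sub_inv_exp_le_one_sub_one_sub_inv_pow hk
  rcases le_total 0 (OPT - k * ε) with hpos | hneg
  · exact (mul_le_mul_of_nonneg_right hexp hpos).trans hratio
  · have hexp_nonneg : 0 ≤ 1 - 1 / exp 1 := by
      rw [sub_nonneg, div_le_one (exp_pos 1)]
      exact one_le_exp zero_le_one
    exact (mul_nonpos_of_nonneg_of_nonpos hexp_nonneg hneg).trans hnonneg

/-- Inductive approximation bound of the greedy-type sequence for monotone
ε-approximately submodular maximization with a size constraint. -/
theorem greedy_sequence_eps_approx_bound {V : Type*} [Fintype V] [DecidableEq V]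
    (f : Finset V → ℝ) (ε : ℝ) (hε : 0 ≤ ε) (k : ℕ) (hk : 1 ≤ k)
    (hmono : ∀ X Y : Finset V, X ⊆ Y → f X ≤ f Y) (hempty : f ∅ = 0)
    (OPT : ℝ)
    (hOPT : IsGreatest {y : ℝ | ∃ S : Finset V, S.card ≤ k ∧ f S = y} OPT)
    (X : ℕ → Finset V) (hX0 : X 0 = ∅)
    (hstep : ∀ i < k, ∃ v ∉ X i, X (i + 1) = insert v (X i) ∧
      f (X (i + 1)) - f (X i) ≥ (OPT - f (X i)) / k - ε) :
    f (X k) ≥ (1 - (1 - 1 / (k : ℝ)) ^ k) * (OPT - k * ε) ∧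
      f (X k) ≥ (1 - 1 / Real.exp 1) * (OPT - k * ε) :=
  greedy_sequence_eps_approx_bound_general f ε k hk hmono hempty OPT X hX0 hstep
end

section
/- For any real numbers a, b, OPT, ε ≥ 0 and integer k ≥ 1, if f(x') ≥ (1 − 1/k)·f(x) + OPT/k − ε and f(x) ≥ (1 − (1 − 1/k)^i)·(OPT − kε), then f(x') ≥ (1 − (1 − 1/k)^{i+1})·(OPT − kε). -/
lemma one_sub_pow_succ_mul_le_of_le {x y t c : ℝ} {i : ℕ} (hc : 0 ≤ c)
    (hx : (1 - c ^ i) * t ≤ x) (hy : c * x + (1 - c) * t ≤ y) :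
    (1 - c ^ (i + 1)) * t ≤ y :=
  calc (1 - c ^ (i + 1)) * t = c * ((1 - c ^ i) * t) + (1 - c) * t := by ring
    _ ≤ c * x + (1 - c) * t := by gcongr
    _ ≤ y := hy

theorem inductive_step_eps_approx_general (fx fx' OPT ε : ℝ) (k i : ℕ) (hk : 1 ≤ k)
    (h1 : fx' ≥ (1 - 1 / (k : ℝ)) * fx + OPT / k - ε)
    (h2 : fx ≥ (1 - (1 - 1 / (k : ℝ)) ^ i) * (OPT - k * ε)) :
    fx' ≥ (1 - (1 - 1 / (k : ℝ)) ^ (i + 1)) * (OPT - k * ε) := by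
  have hc : 0 ≤ 1 - 1 / (k : ℝ) :=
    sub_nonneg.2 (by simpa only [one_div] using Nat.cast_inv_le_one k)
  have hk0 : (k : ℝ) ≠ 0 := by exact_mod_cast Nat.one_le_iff_ne_zero.1 hk
  have hgain : (1 - (1 - 1 / (k : ℝ))) * (OPT - k * ε) = OPT / k - ε := by
    field_simp
    ring
  refine one_sub_pow_succ_mul_le_of_le hc h2 ?_
  rw [hgain]
  linarith

/-- Inductive step inequality in the GSEMO analysis for ε-approximately
submodular maximization (Krause et al. notion). -/
theorem inductive_step_eps_approx (fx fx' OPT ε : ℝ) (k i : ℕ) (hk : 1 ≤ k)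
    (hfx : 0 ≤ fx) (hfx' : 0 ≤ fx') (hOPT : 0 ≤ OPT) (hε : 0 ≤ ε)
    (h1 : fx' ≥ (1 - 1 / (k : ℝ)) * fx + OPT / k - ε)
    (h2 : fx ≥ (1 - (1 - 1 / (k : ℝ)) ^ i) * (OPT - k * ε)) :
    fx' ≥ (1 - (1 - 1 / (k : ℝ)) ^ (i + 1)) * (OPT - k * ε) :=
  inductive_step_eps_approx_general fx fx' OPT ε k i hk h1 h2
end

section
/- Let f : 2^V → ℝ be monotone with submodularity ratio γ_{X,k} = min over L ⊆ X and S with |S| ≤ k, S ∩ X = ∅, of (Σ_{v ∈ S}(f(L ∪ {v}) − f(L)))/(f(L ∪ S) − f(L)). Let x* with |x*| ≤ k achieve f(x*) = OPT. Then for any X ⊆ V with x* \ X nonempty and γ_{X,k} > 0, there exists v ∉ X such that f(X ∪ {v}) − f(X) ≥ (γ_{X,k}/k)·(OPT − f(X)). -/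
/-- Greedy-improvement lemma w.r.t. the submodularity ratio of Das and Kempe. -/
theorem greedy_improvement_submodularity_ratio {V : Type*} [DecidableEq V]
    (f : Finset V → ℝ) (k : ℕ) (hk : 1 ≤ k)
    (hmono : ∀ X Y : Finset V, X ⊆ Y → f X ≤ f Y)
    (xstar : Finset V) (hxcard : xstar.card ≤ k)
    (OPT : ℝ) (hOPT : f xstar = OPT)
    (X : Finset V) (hne : (xstar \ X).Nonempty)
    (γ : ℝ) (hγpos : 0 < γ)
    (hγ : ∀ L S : Finset V, L ⊆ X → S.card ≤ k → Disjoint S X →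
      γ * (f (L ∪ S) - f L) ≤ ∑ v ∈ S, (f (insert v L) - f L)) :
    ∃ v ∉ X, f (insert v X) - f X ≥ γ / k * (OPT - f X) := by
  set S := xstar \ X with hS
  have hkpos : (0:ℝ) < k := by exact_mod_cast hk
  by_cases hle : OPT ≤ f X
  · obtain ⟨v, hv⟩ := hne
    refine ⟨v, (Finset.mem_sdiff.mp hv).2, ?_⟩
    have h1 : f X ≤ f (insert v X) := hmono _ _ (Finset.subset_insert _ _)
    have h2 : γ / k * (OPT - f X) ≤ 0 := by
      apply mul_nonpos_of_nonneg_of_nonpos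
      · positivity
      · linarith
    linarith
  · push_neg at hle
    have hScard : S.card ≤ k := le_trans (Finset.card_le_card Finset.sdiff_subset) hxcard
    have hdisj : Disjoint S X := Finset.sdiff_disjoint
    have hkey := hγ X S (le_refl X) hScard hdisj
    have hsub : xstar ⊆ X ∪ S := by
      rw [hS, Finset.union_sdiff_self_eq_union]
      exact Finset.subset_union_right
    have hOPTle : OPT ≤ f (X ∪ S) := hOPT ▸ hmono _ _ hsub
    have h1 : γ * (OPT - f X) ≤ ∑ v ∈ S, (f (insert v X) - f X) := by
      have : γ * (OPT - f X) ≤ γ * (f (X ∪ S) - f X) := by nlinarith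
      linarith
    have h2 : ∑ v ∈ S, (γ / k * (OPT - f X)) ≤ ∑ v ∈ S, (f (insert v X) - f X) := by
      rw [Finset.sum_const, nsmul_eq_mul]
      have hSk : (S.card : ℝ) ≤ k := by exact_mod_cast hScard
      have : (S.card : ℝ) * (γ / k * (OPT - f X)) ≤ γ * (OPT - f X) := by
        have hd : γ / k * (OPT - f X) = γ * (OPT - f X) / k := by ring
        rw [hd, mul_comm, div_mul_eq_mul_div, div_le_iff₀ hkpos]
        exact mul_le_mul_of_nonneg_left hSk (mul_nonneg hγpos.le (sub_pos.mpr hle).le)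
      linarith
    obtain ⟨v, hv, hv2⟩ := Finset.exists_le_of_sum_le hne h2
    exact ⟨v, (Finset.mem_sdiff.mp hv).2, hv2⟩
end

section
/- For integer k ≥ 1 and real ε with 0 ≤ ε < 1, the following inequality holds: (1/(1 + 2kε/(1−ε)))·(1 − (1 − 1/k)^k·((1−ε)/(1+ε))^k) ≥ (1/(1 + 4kε/(1−ε)^2))·(1 − (1 − 1/k)^k·((1−ε)/(1+ε))^{2k}). -/
/-!
Write `a = (1 - 1/k)^k`, `s = ((1-ε)/(1+ε))^k` and `t = 2kε`. After clearing denominators the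
claim is `(1-ε)(1 - a s²)((1-ε) + t) ≤ (1 - a s)((1-ε)² + 2t)`, whose slack is
`t(1+ε) - a s ((1-ε)²(1-s) + t(2 - s(1-ε)))`. Bernoulli's inequality gives `(1+ε)(1-s) ≤ t`,
which bounds the bracket times `s` by `2t`, and `a ≤ e⁻¹ < 1/2` finishes.
-/

lemma one_sub_inv_pow_le_half {k : ℕ} (hk : 1 ≤ k) : (1 - 1 / (k : ℝ)) ^ k ≤ 1 / 2 := by
  have hk' : (1 : ℝ) ≤ k := by exact_mod_cast hk
  calc (1 - 1 / (k : ℝ)) ^ k ≤ Real.exp (-1) := Real.one_sub_div_pow_le_exp_neg hk'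
    _ ≤ 1 / 2 := Real.exp_neg_one_lt_half.le

lemma one_sub_inv_pow_nonneg (k : ℕ) : 0 ≤ (1 - 1 / (k : ℝ)) ^ k := by
  rcases Nat.eq_zero_or_pos k with rfl | hk
  · simp
  · exact pow_nonneg (sub_nonneg.2 (div_le_one_of_le₀ (by exact_mod_cast hk) (by positivity))) k

lemma one_add_mul_one_sub_pow_le (k : ℕ) {ε : ℝ} (hε0 : 0 ≤ ε) :
    (1 + ε) * (1 - ((1 - ε) / (1 + ε)) ^ k) ≤ 2 * k * ε := by
  have hu : 0 < 1 + ε := by linarith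
  have hb : -1 ≤ (1 - ε) / (1 + ε) := by
    rw [le_div_iff₀ hu]
    linarith
  have hbern := one_add_mul_sub_le_pow hb k
  have hgap : (1 + ε) * ((1 - ε) / (1 + ε) - 1) = -(2 * ε) := by
    field_simp
    ring
  nlinarith

lemma mul_one_sub_mul_sq_le {ε a s t : ℝ} (hε0 : 0 ≤ ε) (hε1 : ε ≤ 1)
    (ha0 : 0 ≤ a) (ha : a ≤ 1 / 2) (hs0 : 0 ≤ s) (hs1 : s ≤ 1)
    (hst : (1 + ε) * (1 - s) ≤ t) :
    (1 - ε) * (1 - a * s ^ 2) * ((1 - ε) + t) ≤ (1 - a * s) * ((1 - ε) ^ 2 + 2 * t) := by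
  have ht : 0 ≤ t := le_trans (mul_nonneg (by linarith) (by linarith)) hst
  have hslack : (1 - a * s) * ((1 - ε) ^ 2 + 2 * t) - (1 - ε) * (1 - a * s ^ 2) * ((1 - ε) + t)
      = t * (1 + ε) - a * (s * ((1 - ε) ^ 2 * (1 - s) + t * (2 - s * (1 - ε)))) := by
    ring
  have hfirst : s * (1 - ε) ^ 2 * (1 - s) ≤ s * (1 - ε) * t := by
    have h : (1 - ε) * (1 - s) ≤ t :=
      le_trans (mul_le_mul_of_nonneg_right (by linarith) (by linarith)) hst
    calc s * (1 - ε) ^ 2 * (1 - s) = s * (1 - ε) * ((1 - ε) * (1 - s)) := by ring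
      _ ≤ s * (1 - ε) * t := mul_le_mul_of_nonneg_left h (mul_nonneg hs0 (by linarith))
  have hbracket : s * ((1 - ε) ^ 2 * (1 - s) + t * (2 - s * (1 - ε))) ≤ 2 * t := by
    have h : s * (1 - ε) * (1 - s) ≤ 1 - s :=
      mul_le_of_le_one_left (by linarith) (mul_le_one₀ hs1 (by linarith) (by linarith))
    nlinarith [mul_le_mul_of_nonneg_left h ht]
  nlinarith [mul_le_mul_of_nonneg_left hbracket ha0]

lemma div_mul_one_sub_mul_sq_le {ε a s t : ℝ} (hε0 : 0 ≤ ε) (hε1 : ε < 1)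
    (ha0 : 0 ≤ a) (ha : a ≤ 1 / 2) (hs0 : 0 ≤ s) (hs1 : s ≤ 1)
    (hst : (1 + ε) * (1 - s) ≤ t) :
    (1 - ε) ^ 2 / ((1 - ε) ^ 2 + 2 * t) * (1 - a * s ^ 2) ≤
      (1 - ε) / ((1 - ε) + t) * (1 - a * s) := by
  have hd : 0 < 1 - ε := by linarith
  have ht : 0 ≤ t := le_trans (mul_nonneg (by linarith) (by linarith)) hst
  rw [div_mul_eq_mul_div, div_mul_eq_mul_div, div_le_div_iff₀ (by positivity) (by positivity)]
  have key := mul_one_sub_mul_sq_le hε0 hε1.le ha0 ha hs0 hs1 hst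
  nlinarith [mul_le_mul_of_nonneg_left key hd.le]

/-- The GSEMO approximation guarantee for ε-approximately submodular functions
(Horel–Singer notion) is at least the best known greedy guarantee. -/
theorem gsemo_guarantee_ge_greedy_guarantee (k : ℕ) (hk : 1 ≤ k) (ε : ℝ)
    (hε0 : 0 ≤ ε) (hε1 : ε < 1) :
    1 / (1 + 2 * k * ε / (1 - ε)) *
        (1 - (1 - 1 / (k : ℝ)) ^ k * ((1 - ε) / (1 + ε)) ^ k) ≥
      1 / (1 + 4 * k * ε / (1 - ε) ^ 2) *
        (1 - (1 - 1 / (k : ℝ)) ^ k * ((1 - ε) / (1 + ε)) ^ (2 * k)) := by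
  have hd : 1 - ε ≠ 0 := by linarith
  have hb0 : 0 ≤ (1 - ε) / (1 + ε) := div_nonneg (by linarith) (by linarith)
  have hb1 : (1 - ε) / (1 + ε) ≤ 1 := (div_le_one₀ (by linarith)).2 (by linarith)
  have hgsemo : 1 / (1 + 2 * k * ε / (1 - ε)) = (1 - ε) / ((1 - ε) + 2 * k * ε) := by
    field_simp
  have hgreedy : 1 / (1 + 4 * k * ε / (1 - ε) ^ 2) =
      (1 - ε) ^ 2 / ((1 - ε) ^ 2 + 2 * (2 * k * ε)) := by
    field_simp
    ring
  rw [ge_iff_le, hgsemo, hgreedy, pow_mul']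
  exact div_mul_one_sub_mul_sq_le hε0 hε1 (one_sub_inv_pow_nonneg k) (one_sub_inv_pow_le_half hk)
    (pow_nonneg hb0 k) (pow_le_one₀ hb0 hb1) (one_add_mul_one_sub_pow_le k hε0)
end

section
/- For real numbers f(x), f(x'), OPT ≥ 0, ε ∈ [0,1), integer k ≥ 1 and integer i ≥ 0: if f(x') ≥ (1 − 1/k)·((1−ε)/(1+ε))·f(x) + ((1−ε)/(k(1+ε)))·OPT and f(x) ≥ (1/(1 + 2kε/(1−ε)))·(1 − (1−1/k)^i·((1−ε)/(1+ε))^i)·OPT, then f(x') ≥ (1/(1 + 2kε/(1−ε)))·(1 − (1−1/k)^{i+1}·((1−ε)/(1+ε))^{i+1})·OPT. -/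
/-- Inductive step used in the GSEMO analysis for the Horel–Singer notion of
approximate submodularity. -/
theorem inductive_step_horel_singer (fx fx' OPT ε : ℝ) (k i : ℕ) (hk : 1 ≤ k)
    (hOPT : 0 ≤ OPT) (hε0 : 0 ≤ ε) (hε1 : ε < 1)
    (h1 : fx' ≥ (1 - 1 / (k : ℝ)) * ((1 - ε) / (1 + ε)) * fx +
      (1 - ε) / (k * (1 + ε)) * OPT)
    (h2 : fx ≥ 1 / (1 + 2 * k * ε / (1 - ε)) *
      (1 - (1 - 1 / (k : ℝ)) ^ i * ((1 - ε) / (1 + ε)) ^ i) * OPT) :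
    fx' ≥ 1 / (1 + 2 * k * ε / (1 - ε)) *
      (1 - (1 - 1 / (k : ℝ)) ^ (i + 1) * ((1 - ε) / (1 + ε)) ^ (i + 1)) * OPT := by
  have hk' : (1 : ℝ) ≤ (k : ℝ) := by exact_mod_cast hk
  have hkpos : (0 : ℝ) < (k : ℝ) := lt_of_lt_of_le one_pos hk'
  have h1ε : (0 : ℝ) < 1 + ε := by linarith
  have h2ε : (0 : ℝ) < 1 - ε := by linarith
  set a : ℝ := (1 - 1 / (k : ℝ)) * ((1 - ε) / (1 + ε)) with ha
  set C : ℝ := 1 / (1 + 2 * k * ε / (1 - ε)) with hC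
  have hap : ∀ j : ℕ, (1 - 1 / (k : ℝ)) ^ j * ((1 - ε) / (1 + ε)) ^ j = a ^ j :=
    fun j => (mul_pow _ _ j).symm
  rw [hap] at h2
  rw [hap]
  have ha0 : 0 ≤ a := by
    apply mul_nonneg
    · have : 1 / (k : ℝ) ≤ 1 := by
        rw [div_le_one hkpos]; exact hk'
      linarith
    · positivity
  have hkey : (1 - ε) / (k * (1 + ε)) = C * (1 - a) := by
    rw [hC, ha]
    have hden : (0 : ℝ) < 1 + 2 * k * ε / (1 - ε) := by positivity
    field_simp
    ring
  have step : fx' ≥ a * (C * (1 - a ^ i) * OPT) + C * (1 - a) * OPT := by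
    rw [← hkey]
    calc fx' ≥ a * fx + (1 - ε) / (k * (1 + ε)) * OPT := h1
      _ ≥ a * (C * (1 - a ^ i) * OPT) + (1 - ε) / (k * (1 + ε)) * OPT := by
          have := mul_le_mul_of_nonneg_left h2 ha0
          linarith
  calc fx' ≥ a * (C * (1 - a ^ i) * OPT) + C * (1 - a) * OPT := step
    _ = C * (1 - a ^ (i + 1)) * OPT := by ring
end

section
/- Let f : 2^V → ℝ be monotone with f(∅) = 0 and submodularity ratio bound γ ∈ (0,1] such that for every X with |X| < k there exists v ∉ X with f(X ∪ {v}) − f(X) ≥ (γ/k)(OPT − f(X)). Then the greedy sequence X_0 = ∅, X_{i+1} = X_i ∪ {v_i} choosing such v_i satisfies f(X_k) ≥ (1 − e^{−γ})·OPT. -/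
/-- The greedy sequence for a monotone function with submodularity-ratio bound
`γ` achieves a `(1 - e^{-γ})` approximation. -/
theorem greedy_sequence_ratio_bound {V : Type*} [Fintype V] [DecidableEq V]
    (f : Finset V → ℝ) (k : ℕ) (hk : 1 ≤ k) (γ : ℝ) (hγ0 : 0 < γ) (hγ1 : γ ≤ 1)
    (hmono : ∀ X Y : Finset V, X ⊆ Y → f X ≤ f Y) (hempty : f ∅ = 0)
    (OPT : ℝ)
    (hOPT : IsGreatest {y : ℝ | ∃ S : Finset V, S.card ≤ k ∧ f S = y} OPT)
    (hex : ∀ X : Finset V, X.card < k →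
      ∃ v ∉ X, f (insert v X) - f X ≥ γ / k * (OPT - f X))
    (X : ℕ → Finset V) (hX0 : X 0 = ∅)
    (hstep : ∀ i < k, ∃ v ∉ X i, X (i + 1) = insert v (X i) ∧
      f (X (i + 1)) - f (X i) ≥ γ / k * (OPT - f (X i))) :
    f (X k) ≥ (1 - Real.exp (-γ)) * OPT := by
  have hkpos : (0 : ℝ) < k := by exact_mod_cast hk
  have hOPT0 : 0 ≤ OPT := hOPT.2 ⟨∅, by simpa using hk.le, hempty⟩
  have hrate : (0 : ℝ) ≤ 1 - γ / k := by
    have : γ / k ≤ 1 := by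
      rw [div_le_one hkpos]
      exact hγ1.trans (by exact_mod_cast hk)
    linarith
  -- key induction
  have key : ∀ i ≤ k, OPT - f (X i) ≤ (1 - γ / k) ^ i * OPT := by
    intro i hi
    induction i with
    | zero => simp [hX0, hempty]
    | succ n ih =>
      have hn : n < k := Nat.lt_of_succ_le hi
      obtain ⟨v, _, _, hstep'⟩ := hstep n hn
      have ihn := ih hn.le
      have : OPT - f (X (n + 1)) ≤ (1 - γ / k) * (OPT - f (X n)) := by
        have := hstep'
        nlinarith [hkpos, hγ0]
      calc OPT - f (X (n + 1)) ≤ (1 - γ / k) * (OPT - f (X n)) := this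
        _ ≤ (1 - γ / k) * ((1 - γ / k) ^ n * OPT) := by
            exact mul_le_mul_of_nonneg_left ihn hrate
        _ = (1 - γ / k) ^ (n + 1) * OPT := by ring
  have hkey := key k le_rfl
  have hexp : (1 - γ / k) ^ k ≤ Real.exp (-γ) := by
    have h1 : 1 - γ / k ≤ Real.exp (-(γ / k)) := by
      have := Real.add_one_le_exp (-(γ / k)); linarith
    calc (1 - γ / k) ^ k ≤ Real.exp (-(γ / k)) ^ k :=
          pow_le_pow_left₀ hrate h1 k
      _ = Real.exp (k * -(γ / k)) := (Real.exp_nat_mul _ _).symm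
      _ = Real.exp (-γ) := by
          congr 1
          field_simp
  have : (1 - γ / k) ^ k * OPT ≤ Real.exp (-γ) * OPT :=
    mul_le_mul_of_nonneg_right hexp hOPT0
  linarith
end

section
/- Let f : 2^V → ℝ≥0 be submodular on a finite set V with |V| = n, and let ε > 0. Suppose x ⊆ V is a (1 + ε/n²)-approximate local optimum: f(x \ {v}) ≤ (1 + ε/n²)f(x) for all v ∈ x and f(x ∪ {v}) ≤ (1 + ε/n²)f(x) for all v ∉ x. Then max{f(x), f(V \ x)} ≥ (1/3 − ε/n)·OPT, where OPT = max_{S ⊆ V} f(S). -/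
/-- Lemma of Feige, Mirrokni and Vondrák: a `(1 + ε/n²)`-approximate local
optimum `x` of a non-negative submodular function satisfies
`max{f(x), f(V \ x)} ≥ (1/3 − ε/n)·OPT`. -/
theorem approx_local_opt_guarantee {V : Type*} [Fintype V] [DecidableEq V]
    (f : Finset V → ℝ) (n : ℕ) (hn : n = Fintype.card V) (hn1 : 1 ≤ n)
    (hsub : ∀ X Y : Finset V, X ⊆ Y → ∀ v ∉ Y,
      f (insert v X) - f X ≥ f (insert v Y) - f Y)
    (hnonneg : ∀ S : Finset V, 0 ≤ f S)
    (ε : ℝ) (hε : 0 < ε)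
    (x : Finset V)
    (hdel : ∀ v ∈ x, f (x.erase v) ≤ (1 + ε / (n : ℝ) ^ 2) * f x)
    (hins : ∀ v ∉ x, f (insert v x) ≤ (1 + ε / (n : ℝ) ^ 2) * f x)
    (OPT : ℝ) (hOPT : IsGreatest {y : ℝ | ∃ S : Finset V, f S = y} OPT) :
    max (f x) (f (Finset.univ \ x)) ≥ (1 / 3 - ε / n) * OPT := by
  classical
  obtain ⟨⟨C, hC⟩, hub⟩ := hOPT
  have hnpos : (0:ℝ) < n := by exact_mod_cast Nat.lt_of_lt_of_le Nat.zero_lt_one hn1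
  set δ : ℝ := ε / (n:ℝ)^2 * f x with hδ
  have hδ0 : 0 ≤ δ := by
    have := hnonneg x
    positivity
  have hexp : (1 + ε / (n:ℝ)^2) * f x = f x + δ := by rw [hδ]; ring
  -- deletion step
  have hstep_del : ∀ S : Finset V, S ⊆ x → ∀ v ∈ x, v ∉ S →
      f S ≤ f (insert v S) + δ := by
    intro S hS v hv hvS
    have hsub' : S ⊆ x.erase v := by
      intro a ha
      exact Finset.mem_erase.mpr ⟨fun h => hvS (h ▸ ha), hS ha⟩
    have h1 := hsub S (x.erase v) hsub' v (Finset.notMem_erase v x)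
    rw [Finset.insert_erase hv] at h1
    have h2 := hdel v hv
    rw [hexp] at h2
    linarith
  -- insertion step
  have hstep_ins : ∀ S : Finset V, x ⊆ S → ∀ v, v ∉ S →
      f (insert v S) ≤ f S + δ := by
    intro S hxS v hv
    have h1 := hsub x S hxS v hv
    have h2 := hins v (fun h => hv (hxS h))
    rw [hexp] at h2
    linarith
  -- chain down: subsets of x
  have chain_down : ∀ k : ℕ, ∀ S : Finset V, S ⊆ x → (x \ S).card = k →
      f S ≤ f x + k * δ := by
    intro k
    induction k with
    | zero =>
      intro S hS hcard
      have hx : x \ S = ∅ := Finset.card_eq_zero.mp hcard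
      have : S = x := Finset.Subset.antisymm hS (Finset.sdiff_eq_empty_iff_subset.mp hx)
      simp [this]
    | succ k ih =>
      intro S hS hcard
      have hne : (x \ S).Nonempty := by
        rw [← Finset.card_pos, hcard]; omega
      obtain ⟨v, hv⟩ := hne
      obtain ⟨hvx, hvS⟩ := Finset.mem_sdiff.mp hv
      have hS' : insert v S ⊆ x := Finset.insert_subset hvx hS
      have hcard' : (x \ insert v S).card = k := by
        rw [Finset.sdiff_insert, Finset.card_erase_of_mem hv, hcard]
        omega
      have h1 := ih (insert v S) hS' hcard'
      have h2 := hstep_del S hS v hvx hvS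
      push_cast
      push_cast at h1
      linarith
  -- chain up: supersets of x
  have chain_up : ∀ k : ℕ, ∀ S : Finset V, x ⊆ S → (S \ x).card = k →
      f S ≤ f x + k * δ := by
    intro k
    induction k with
    | zero =>
      intro S hS hcard
      have hx : S \ x = ∅ := Finset.card_eq_zero.mp hcard
      have : S = x := Finset.Subset.antisymm (by
        intro a ha
        by_contra hax
        exact (Finset.eq_empty_iff_forall_notMem.mp hx a)
          (Finset.mem_sdiff.mpr ⟨ha, hax⟩)) hS
      simp [this]
    | succ k ih =>
      intro S hS hcard
      have hne : (S \ x).Nonempty := by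
        rw [← Finset.card_pos, hcard]; omega
      obtain ⟨v, hv⟩ := hne
      obtain ⟨hvS, hvx⟩ := Finset.mem_sdiff.mp hv
      have hS' : x ⊆ S.erase v := by
        intro a ha
        exact Finset.mem_erase.mpr ⟨fun h => hvx (h ▸ ha), hS ha⟩
      have hcard' : (S.erase v \ x).card = k := by
        have he : S.erase v \ x = (S \ x).erase v := by
          ext a
          simp only [Finset.mem_erase, Finset.mem_sdiff]
          tauto
        rw [he, Finset.card_erase_of_mem hv, hcard]
        omega
      have h1 := ih (S.erase v) hS' hcard'
      have h2 := hstep_ins (S.erase v) hS' v (Finset.notMem_erase v S)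
      rw [Finset.insert_erase hvS] at h2
      push_cast
      push_cast at h1
      linarith
  -- general submodular inequality for disjoint additions
  have subgen : ∀ T X Y : Finset V, X ⊆ Y → Disjoint T Y →
      f (Y ∪ T) - f Y ≤ f (X ∪ T) - f X := by
    intro T
    induction T using Finset.induction_on with
    | empty => intro X Y _ _; simp
    | @insert v T hvT ih =>
      intro X Y hXY hdisj
      have hvY : v ∉ Y := by
        intro h
        exact (Finset.disjoint_left.mp hdisj (Finset.mem_insert_self v T)) h
      have hdisj' : Disjoint T Y :=
        hdisj.mono_left (Finset.subset_insert v T)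
      have h1 := ih X Y hXY hdisj'
      have hvYT : v ∉ Y ∪ T := by simp [hvY, hvT]
      have h2 := hsub (X ∪ T) (Y ∪ T) (Finset.union_subset_union_left hXY) v hvYT
      rw [Finset.union_insert, Finset.union_insert]
      linarith
  -- apply to C∩x, C\x
  have h3 : f C + f ∅ ≤ f (C ∩ x) + f (C \ x) := by
    have := subgen (C ∩ x) ∅ (C \ x) (Finset.empty_subset _)
      (Finset.disjoint_left.mpr (fun a ha hb =>
        (Finset.mem_sdiff.mp hb).2 (Finset.mem_inter.mp ha).2))
    rw [Finset.sdiff_union_inter, Finset.empty_union] at this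
    linarith
  have h4 : f Finset.univ + f (C \ x) ≤ f (C ∪ x) + f (Finset.univ \ x) := by
    have hXY : C \ x ⊆ Finset.univ \ x :=
      Finset.sdiff_subset_sdiff (Finset.subset_univ C) (Finset.Subset.refl x)
    have hd : Disjoint x (Finset.univ \ x) :=
      Finset.disjoint_sdiff
    have := subgen x (C \ x) (Finset.univ \ x) hXY hd
    have e1 : C \ x ∪ x = C ∪ x := Finset.sdiff_union_self_eq_union
    have e2 : Finset.univ \ x ∪ x = Finset.univ := by
      rw [Finset.sdiff_union_self_eq_union]; simp
    rw [e1, e2] at this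
    linarith
  -- bounds on f(C∩x) and f(C∪x)
  have hcard1 : ((x \ (C ∩ x)).card : ℝ) ≤ n := by
    have : (x \ (C ∩ x)).card ≤ Fintype.card V :=
      Finset.card_le_card (Finset.subset_univ _)
    exact_mod_cast hn ▸ this
  have hcard2 : (((C ∪ x) \ x).card : ℝ) ≤ n := by
    have : ((C ∪ x) \ x).card ≤ Fintype.card V :=
      Finset.card_le_card (Finset.subset_univ _)
    exact_mod_cast hn ▸ this
  have h5 : f (C ∩ x) ≤ f x + n * δ := by
    have := chain_down (x \ (C ∩ x)).card (C ∩ x) (Finset.inter_subset_right) rfl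
    nlinarith [hδ0, hcard1]
  have h6 : f (C ∪ x) ≤ f x + n * δ := by
    have := chain_up ((C ∪ x) \ x).card (C ∪ x) (Finset.subset_union_right) rfl
    nlinarith [hδ0, hcard2]
  -- put together
  have hnδ : (n:ℝ) * δ = ε / n * f x := by
    rw [hδ]; field_simp
  set M := max (f x) (f (Finset.univ \ x)) with hM
  have hM1 : f x ≤ M := le_max_left _ _
  have hM2 : f (Finset.univ \ x) ≤ M := le_max_right _ _
  have hM0 : 0 ≤ M := le_trans (hnonneg x) hM1
  have hkey : OPT ≤ (3 + 2 * (ε / n)) * M := by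
    have h0 : 0 ≤ f ∅ := hnonneg ∅
    have h0' : 0 ≤ f Finset.univ := hnonneg Finset.univ
    have he' : (0:ℝ) ≤ ε / n := by positivity
    have hmul : ε / n * f x ≤ ε / n * M := mul_le_mul_of_nonneg_left hM1 he'
    linarith [h3, h4, h5, h6, hnδ, hM1, hM2, hC.ge, hC.le]
  have hOPT0 : 0 ≤ OPT := hC ▸ hnonneg C
  have he : 0 < ε / n := div_pos hε hnpos
  rw [ge_iff_le]
  by_cases hcase : ε / n ≤ 1 / 3
  · nlinarith [mul_nonneg (sub_nonneg.mpr hcase) (sub_nonneg.mpr hkey),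
      mul_nonneg he.le hM0, mul_nonneg (mul_nonneg he.le he.le) hM0]
  · have : (1/3 - ε/n) * OPT ≤ 0 :=
      mul_nonpos_of_nonpos_of_nonneg (by linarith) hOPT0
    linarith
end
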